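/- Conditional expectation lower bound: for agents i ≠ j with independent utilities, E[u_i | β_i u_i = max_k β_k u_k] ≥ E[u_i | β_i u_i ≥ β_j u_j], assuming both conditioning events have positive probability. -/

import Mathlib

/-!
Write `Z k = β k * u k` and condition on `Z i = x`. Since `Z i` is independent of the other
scores, `P(Z j ≤ x) = φ x` and `P(Z k ≤ x for all k ≠ i) = Φ x * φ x`, where `φ` is the
distribution function of `Z j` and `Φ` the product of those of the remaining `Z k`. Both
conditional expectations are therefore averages of `x / β i` against the law of `Z i`, with
weights `φ` and `Φ * φ` respectively. Reweighting by the increasing factor `Φ` can only raise the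
mean of an increasing function; this is Chebyshev's integral inequality, obtained by integrating
`(f x - f y) * (Φ x - Φ y) * φ x * φ y ≥ 0` over the product measure.
-/

open MeasureTheory ProbabilityTheory

noncomputable def condExpEvent {Ω : Type*} [MeasurableSpace Ω] (μ : Measure Ω)
    (X : Ω → ℝ) (A : Set Ω) : ℝ :=
  (μ A).toReal⁻¹ * ∫ ω in A, X ω ∂μ

def IntervalSupport {Ω : Type*} [MeasurableSpace Ω] (μ : Measure Ω)
    (X : Ω → ℝ) (a b : ℝ) : Prop :=
  a < b ∧ μ {ω | X ω ∈ Set.Icc a b} = 1 ∧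
    ∀ c d : ℝ, a ≤ c → c < d → d ≤ b → 0 < μ {ω | X ω ∈ Set.Ioo c d}

noncomputable def resProb {Ω : Type*} [MeasurableSpace Ω] (μ : Measure Ω) {n : ℕ}
    (u : Fin n → Ω → ℝ) (β : Fin n → ℝ) (i : Fin n) : ENNReal :=
  μ {ω | β i * u i ω = ⨆ j, β j * u j ω}

def PDFBoundedAbove {Ω : Type*} [MeasurableSpace Ω] (μ : Measure Ω)
    (X : Ω → ℝ) (q : ℝ) : Prop :=
  ∀ a b : ℝ, a ≤ b → μ {ω | X ω ∈ Set.Ioc a b} ≤ ENNReal.ofReal (q * (b - a))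

def PDFBoundedBelowOn {Ω : Type*} [MeasurableSpace Ω] (μ : Measure Ω)
    (X : Ω → ℝ) (p a b : ℝ) : Prop :=
  ∀ c d : ℝ, a ≤ c → c ≤ d → d ≤ b → ENNReal.ofReal (p * (d - c)) ≤ μ {ω | X ω ∈ Set.Ioc c d}

theorem eq_ciSup_iff_forall_le {ι α : Type*} [Finite ι] [ConditionallyCompleteLattice α]
    {f : ι → α} {i : ι} : f i = ⨆ k, f k ↔ ∀ k, f k ≤ f i := by
  have : Nonempty ι := ⟨i⟩
  exact ⟨fun h k ↦ h ▸ le_ciSup (Finite.bddAbove_range f) k,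
    fun h ↦ le_antisymm (le_ciSup (Finite.bddAbove_range f) i) (ciSup_le h)⟩

theorem Monotone.integral_mul_integral_le {α : Type*} [LinearOrder α] [MeasurableSpace α]
    {m : Measure α} [SFinite m] {f g w : α → ℝ} (hf : Monotone f) (hg : Monotone g)
    (hw : 0 ≤ w) (hwi : Integrable w m) (hfw : Integrable (fun x ↦ f x * w x) m)
    (hgw : Integrable (fun x ↦ g x * w x) m) (hfgw : Integrable (fun x ↦ f x * (g x * w x)) m) :
    (∫ x, f x * w x ∂m) * ∫ x, g x * w x ∂m ≤ (∫ x, f x * (g x * w x) ∂m) * ∫ x, w x ∂m := by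
  have hdiag : ∀ p : α × α, 0 ≤ (f p.1 - f p.2) * (g p.1 - g p.2) * (w p.1 * w p.2) := by
    intro p
    refine mul_nonneg ?_ (mul_nonneg (hw _) (hw _))
    rcases le_total p.1 p.2 with h | h
    · exact mul_nonneg_of_nonpos_of_nonpos (sub_nonpos.2 (hf h)) (sub_nonpos.2 (hg h))
    · exact mul_nonneg (sub_nonneg.2 (hf h)) (sub_nonneg.2 (hg h))
  have hexpand : (fun p : α × α ↦ (f p.1 - f p.2) * (g p.1 - g p.2) * (w p.1 * w p.2)) =
      fun p ↦ (f p.1 * (g p.1 * w p.1) * w p.2 + w p.1 * (f p.2 * (g p.2 * w p.2))) -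
        (f p.1 * w p.1 * (g p.2 * w p.2) + g p.1 * w p.1 * (f p.2 * w p.2)) := by
    ext p; ring
  have h : 0 ≤ ∫ p, (f p.1 - f p.2) * (g p.1 - g p.2) * (w p.1 * w p.2) ∂(m.prod m) :=
    integral_nonneg hdiag
  have i1 := hfgw.mul_prod hwi
  have i2 := hwi.mul_prod hfgw
  have i3 := hfw.mul_prod hgw
  have i4 := hgw.mul_prod hfw
  rw [hexpand, integral_sub (i1.fun_add i2) (i3.fun_add i4), integral_add i1 i2,
    integral_add i3 i4, integral_prod_mul (fun x ↦ f x * (g x * w x)) w,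
    integral_prod_mul w (fun x ↦ f x * (g x * w x)),
    integral_prod_mul (fun x ↦ f x * w x) (fun x ↦ g x * w x),
    integral_prod_mul (fun x ↦ g x * w x) (fun x ↦ f x * w x)] at h
  linarith

theorem inv_integral_mul_integral_le_of_monotone {m : Measure ℝ} [IsFiniteMeasure m]
    {f φ Φ : ℝ → ℝ} (hf : Monotone f) (hfi : Integrable f m) (hφ : Monotone φ) (hφ0 : 0 ≤ φ)
    (hφ1 : φ ≤ 1) (hΦ : Monotone Φ) (hΦ0 : 0 ≤ Φ) (hΦ1 : Φ ≤ 1)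
    (hpos : 0 < ∫ x, Φ x * φ x ∂m) :
    (∫ x, φ x ∂m)⁻¹ * ∫ x, f x * φ x ∂m ≤
      (∫ x, Φ x * φ x ∂m)⁻¹ * ∫ x, f x * (Φ x * φ x) ∂m := by
  have hbound : ∀ {g : ℝ → ℝ}, 0 ≤ g → g ≤ 1 → ∀ x, ‖g x‖ ≤ 1 := fun h0 h1 x ↦ by
    rw [Real.norm_of_nonneg (h0 x)]; exact h1 x
  have hΦφ_le : ∀ x, ‖Φ x * φ x‖ ≤ 1 := fun x ↦ by
    rw [norm_mul]; exact mul_le_one₀ (hbound hΦ0 hΦ1 x) (norm_nonneg _) (hbound hφ0 hφ1 x)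
  have hφi : Integrable φ m :=
    .of_bound hφ.measurable.aestronglyMeasurable 1 (.of_forall (hbound hφ0 hφ1))
  have hΦφi : Integrable (fun x ↦ Φ x * φ x) m :=
    hφi.bdd_mul hΦ.measurable.aestronglyMeasurable (.of_forall (hbound hΦ0 hΦ1))
  have hφpos : 0 < ∫ x, φ x ∂m := hpos.trans_le <| integral_mono hΦφi hφi fun x ↦
    mul_le_of_le_one_left (hφ0 x) (hΦ1 x)
  rw [inv_mul_eq_div, inv_mul_eq_div, div_le_div_iff₀ hφpos hpos]
  exact hf.integral_mul_integral_le hΦ hφ0 hφi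
    (hfi.mul_bdd hφ.measurable.aestronglyMeasurable (.of_forall (hbound hφ0 hφ1))) hΦφi
    (hfi.mul_bdd hΦφi.aestronglyMeasurable (.of_forall hΦφ_le))

namespace ProbabilityTheory

theorem IndepFun.setIntegral_preimage_prodMk {Ω α γ : Type*} [MeasurableSpace Ω]
    [MeasurableSpace α] [MeasurableSpace γ] {μ : Measure Ω} [IsFiniteMeasure μ] {X : Ω → α}
    {W : Ω → γ} (hXW : IndepFun X W μ) (hX : AEMeasurable X μ) (hW : AEMeasurable W μ)
    {S : Set (α × γ)} (hS : MeasurableSet S) {f : α → ℝ} (hf : Integrable f (μ.map X)) :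
    ∫ ω in (fun ω ↦ (X ω, W ω)) ⁻¹' S, f (X ω) ∂μ =
      ∫ x, f x * (μ.map W).real (Prod.mk x ⁻¹' S) ∂(μ.map X) := by
  have hmap := (indepFun_iff_map_prod_eq_prod_map_map hX hW).1 hXW
  have hf' : Integrable (fun p : α × γ ↦ f p.1) ((μ.map X).prod (μ.map W)) := hf.comp_fst _
  rw [← setIntegral_map (f := fun p : α × γ ↦ f p.1) hS (hmap ▸ hf'.aestronglyMeasurable)
      (hX.prodMk hW), hmap, ← integral_indicator hS, integral_prod _ (hf'.indicator hS)]
  refine integral_congr_ae (.of_forall fun x ↦ ?_)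
  have hsec : ∀ w, S.indicator (fun p : α × γ ↦ f p.1) (x, w) =
      (Prod.mk x ⁻¹' S).indicator (fun _ ↦ f x) w := fun w ↦ by
    by_cases hw : (x, w) ∈ S <;> simp [Set.indicator, hw]
  simp only [hsec, integral_indicator_const _ (measurable_prodMk_left hS), smul_eq_mul]
  ring

section

variable {Ω ι : Type*} [MeasurableSpace Ω] {μ : Measure Ω} {Z : ι → Ω → ℝ}

theorem iIndepFun.indepFun_erase [Fintype ι] [DecidableEq ι] (h : iIndepFun Z μ)
    (hZ : ∀ k, Measurable (Z k)) (i : ι) :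
    IndepFun (Z i) (fun ω (k : Finset.univ.erase i) ↦ Z k ω) μ := by
  have := (h.indepFun_finset {i} (Finset.univ.erase i) (by simp) hZ).comp
    (measurable_pi_apply ⟨i, Finset.mem_singleton_self i⟩) measurable_id
  exact this

variable [IsProbabilityMeasure μ]

theorem iIndepFun.map_measureReal_forall_le (h : iIndepFun Z μ) (hZ : ∀ k, Measurable (Z k))
    (s : Finset ι) (x : ℝ) :
    (μ.map fun ω (k : s) ↦ Z k ω).real {w | ∀ k, w k ≤ x} = ∏ k ∈ s, cdf (μ.map (Z k)) x := by
  have hS : MeasurableSet {w : s → ℝ | ∀ k, w k ≤ x} := by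
    simp only [Set.ofPred_forall]
    exact .iInter fun k ↦ measurableSet_le (by fun_prop) (by fun_prop)
  have hset : (fun ω (k : s) ↦ Z k ω) ⁻¹' {w | ∀ k, w k ≤ x} = ⋂ k ∈ s, Z k ⁻¹' Set.Iic x := by
    ext; simp
  have hW : Measurable fun ω (k : s) ↦ Z k ω := measurable_pi_lambda _ fun k ↦ hZ k
  rw [map_measureReal_apply hW hS, hset, measureReal_def,
    h.measure_inter_preimage_eq_mul s fun _ _ ↦ measurableSet_Iic, ENNReal.toReal_prod]
  refine Finset.prod_congr rfl fun k _ ↦ ?_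
  have := Measure.isProbabilityMeasure_map (μ := μ) (hZ k).aemeasurable
  rw [cdf_eq_real, map_measureReal_apply (hZ k) measurableSet_Iic, measureReal_def]

theorem IndepFun.setIntegral_setOf_le {X Y : Ω → ℝ} (hXY : IndepFun X Y μ) (hX : Measurable X)
    (hY : Measurable Y) {f : ℝ → ℝ} (hf : Integrable f (μ.map X)) :
    ∫ ω in {ω | Y ω ≤ X ω}, f (X ω) ∂μ = ∫ x, f x * cdf (μ.map Y) x ∂(μ.map X) := by
  have := Measure.isProbabilityMeasure_map (μ := μ) hY.aemeasurable
  rw [show {ω | Y ω ≤ X ω} = (fun ω ↦ (X ω, Y ω)) ⁻¹' {p : ℝ × ℝ | p.2 ≤ p.1} from rfl,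
    hXY.setIntegral_preimage_prodMk hX.aemeasurable hY.aemeasurable
      (measurableSet_le measurable_snd measurable_fst) hf]
  simp_rw [cdf_eq_real]
  rfl

theorem IndepFun.measureReal_setOf_le {X Y : Ω → ℝ} (hXY : IndepFun X Y μ) (hX : Measurable X)
    (hY : Measurable Y) : μ.real {ω | Y ω ≤ X ω} = ∫ x, cdf (μ.map Y) x ∂(μ.map X) := by
  simpa using hXY.setIntegral_setOf_le hX hY (integrable_const (1 : ℝ))

theorem iIndepFun.setIntegral_forall_le [Fintype ι] [DecidableEq ι] (h : iIndepFun Z μ)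
    (hZ : ∀ k, Measurable (Z k)) (i : ι) {f : ℝ → ℝ} (hf : Integrable f (μ.map (Z i))) :
    ∫ ω in {ω | ∀ k, Z k ω ≤ Z i ω}, f (Z i ω) ∂μ =
      ∫ x, f x * ∏ k ∈ Finset.univ.erase i, cdf (μ.map (Z k)) x ∂(μ.map (Z i)) := by
  have hS : MeasurableSet {p : ℝ × (Finset.univ.erase i → ℝ) | ∀ k, p.2 k ≤ p.1} := by
    simp only [Set.ofPred_forall]
    exact .iInter fun k ↦ measurableSet_le (by fun_prop) (by fun_prop)
  have hset : {ω | ∀ k, Z k ω ≤ Z i ω} =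
      (fun ω ↦ (Z i ω, fun k : Finset.univ.erase i ↦ Z k ω)) ⁻¹' {p | ∀ k, p.2 k ≤ p.1} := by
    ext ω
    simp only [Set.mem_preimage, Subtype.forall, Finset.mem_erase]
    exact ⟨fun hle k _ ↦ hle k,
      fun hle k ↦ if hk : k = i then hk ▸ le_rfl else hle k ⟨hk, Finset.mem_univ k⟩⟩
  have hW : Measurable fun ω (k : Finset.univ.erase i) ↦ Z k ω :=
    measurable_pi_lambda _ fun k ↦ hZ k
  rw [hset, (h.indepFun_erase hZ i).setIntegral_preimage_prodMk (hZ i).aemeasurable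
    hW.aemeasurable hS hf]
  exact integral_congr_ae (.of_forall fun x ↦
    congrArg (f x * ·) (h.map_measureReal_forall_le hZ _ x))

theorem iIndepFun.measureReal_forall_le [Fintype ι] [DecidableEq ι] (h : iIndepFun Z μ)
    (hZ : ∀ k, Measurable (Z k)) (i : ι) :
    μ.real {ω | ∀ k, Z k ω ≤ Z i ω} =
      ∫ x, ∏ k ∈ Finset.univ.erase i, cdf (μ.map (Z k)) x ∂(μ.map (Z i)) := by
  simpa using h.setIntegral_forall_le hZ i (integrable_const (1 : ℝ))

end

end ProbabilityTheory

theorem condExpEvent_le_condExpEvent_of_iIndepFun {Ω ι : Type*} [MeasurableSpace Ω]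
    {μ : Measure Ω} [IsProbabilityMeasure μ] [Fintype ι] {Z : ι → Ω → ℝ}
    (hZ : ∀ k, Measurable (Z k)) (hindep : iIndepFun Z μ) {f : ℝ → ℝ} (hf : Monotone f)
    {i j : ι} (hfi : Integrable (fun ω ↦ f (Z i ω)) μ) (hij : i ≠ j)
    (hpos : 0 < μ {ω | ∀ k, Z k ω ≤ Z i ω}) :
    condExpEvent μ (fun ω ↦ f (Z i ω)) {ω | Z j ω ≤ Z i ω} ≤
      condExpEvent μ (fun ω ↦ f (Z i ω)) {ω | ∀ k, Z k ω ≤ Z i ω} := by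
  classical
  have hjT : j ∈ Finset.univ.erase i := Finset.mem_erase.2 ⟨hij.symm, Finset.mem_univ j⟩
  have hfi' : Integrable f (μ.map (Z i)) :=
    (integrable_map_measure hf.measurable.aestronglyMeasurable (hZ i).aemeasurable).2 hfi
  have hposA := ENNReal.toReal_pos hpos.ne' (measure_ne_top _ _)
  rw [← measureReal_def, hindep.measureReal_forall_le hZ i] at hposA
  rw [condExpEvent, condExpEvent, ← measureReal_def, ← measureReal_def,
    (hindep.indepFun hij).measureReal_setOf_le (hZ i) (hZ j),
    (hindep.indepFun hij).setIntegral_setOf_le (hZ i) (hZ j) hfi',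
    hindep.measureReal_forall_le hZ i, hindep.setIntegral_forall_le hZ i hfi']
  simp_rw [← Finset.prod_erase_mul _ _ hjT] at hposA ⊢
  exact inv_integral_mul_integral_le_of_monotone hf hfi'
    (monotone_cdf _) (fun x ↦ cdf_nonneg _ x) (fun x ↦ cdf_le_one _ x)
    (fun a b h ↦ Finset.prod_le_prod (fun k _ ↦ cdf_nonneg _ _) fun k _ ↦ monotone_cdf _ h)
    (fun x ↦ Finset.prod_nonneg fun k _ ↦ cdf_nonneg _ x)
    (fun x ↦ Finset.prod_le_one (fun k _ ↦ cdf_nonneg _ x) fun k _ ↦ cdf_le_one _ x) hposA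

theorem stmt16_general {Ω : Type*} [MeasurableSpace Ω] (μ : Measure Ω) [IsProbabilityMeasure μ]
    {n : ℕ} (u : Fin n → Ω → ℝ) (hmeas : ∀ i, Measurable (u i))
    (hindep : iIndepFun u μ)
    (hrange : ∀ i ω, u i ω ∈ Set.Icc (0:ℝ) 1)
    (β : Fin n → ℝ) (hβ : ∀ j, 0 < β j)
    (i j : Fin n) (hij : i ≠ j)
    (hpos1 : 0 < μ {ω | β i * u i ω = ⨆ k, β k * u k ω}) :
    condExpEvent μ (u i) {ω | β j * u j ω ≤ β i * u i ω}
      ≤ condExpEvent μ (u i) {ω | β i * u i ω = ⨆ k, β k * u k ω} := by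
  set Z : Fin n → Ω → ℝ := fun k ω ↦ β k * u k ω
  have hZ : ∀ k, Measurable (Z k) := fun k ↦ (hmeas k).const_mul _
  have hZindep : iIndepFun Z μ := hindep.comp (fun k t ↦ β k * t) fun k ↦ measurable_const_mul _
  have hu : u i = fun ω ↦ Z i ω / β i := funext fun ω ↦ (mul_div_cancel_left₀ _ (hβ i).ne').symm
  have hA : {ω | β i * u i ω = ⨆ k, β k * u k ω} = {ω | ∀ k, Z k ω ≤ Z i ω} :=
    Set.ext fun ω ↦ eq_ciSup_iff_forall_le (f := fun k ↦ Z k ω)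
  have hui : Integrable (u i) μ := .of_bound (hmeas i).aestronglyMeasurable 1 <| .of_forall
    fun ω ↦ by rw [Real.norm_of_nonneg (hrange i ω).1]; exact (hrange i ω).2
  rw [hA] at hpos1 ⊢
  convert condExpEvent_le_condExpEvent_of_iIndepFun hZ hZindep
    (fun a b h ↦ div_le_div_of_nonneg_right h (hβ i).le) (hu ▸ hui) hij hpos1 using 2

theorem stmt16 {Ω : Type*} [MeasurableSpace Ω] (μ : Measure Ω) [IsProbabilityMeasure μ]
    {n : ℕ} (hn : 0 < n) (u : Fin n → Ω → ℝ) (hmeas : ∀ i, Measurable (u i))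
    (hindep : iIndepFun u μ)
    (hrange : ∀ i ω, u i ω ∈ Set.Icc (0:ℝ) 1)
    (hatom : ∀ i (r : ℝ), μ {ω | u i ω = r} = 0)
    (β : Fin n → ℝ) (hβ : ∀ j, 0 < β j)
    (i j : Fin n) (hij : i ≠ j)
    (hpos1 : 0 < μ {ω | β i * u i ω = ⨆ k, β k * u k ω})
    (hpos2 : 0 < μ {ω | β j * u j ω ≤ β i * u i ω}) :
    condExpEvent μ (u i) {ω | β j * u j ω ≤ β i * u i ω}
      ≤ condExpEvent μ (u i) {ω | β i * u i ω = ⨆ k, β k * u k ω} :=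
  stmt16_general μ u hmeas hindep hrange β hβ i j hij hpos1
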